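/- Let μ be a σ-finite measure on a measurable space 𝒳 and let s, t be probability densities with respect to μ such that the probability measures P_s = s·μ and P_t = t·μ are distinct. If X₁,…,Xₙ are i.i.d. with law P_s, then the Hellinger affinity ρ(P_s,P_t) = ∫√(s t) dμ satisfies ρ(P_s,P_t) < 1, and the probability (under P_s) that the likelihood of t exceeds that of s is bounded by its n-th power: P_s[∏_{i=1}^n t(X_i) > ∏_{i=1}^n s(X_i)] ≤ ρ(P_s,P_t)^n. -/

import Mathlib

/-!
Pointwise, `s + t = 2 √(s t) + (√s - √t)²`, so integrating two probability densities gives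
`2 = 2 ρ + ∫ (√s - √t)² dμ`: hence `ρ ≤ 1`, with equality only if `s = t` almost everywhere.
For the test error, `P_sⁿ` has density `∏ s(xᵢ)` with respect to `μⁿ`, and on the event
`∏ s(xᵢ) < ∏ t(xᵢ)` this density is at most `√(∏ s(xᵢ) ∏ t(xᵢ)) = ∏ √(s t)(xᵢ)`, whose
`μⁿ`-integral is `ρⁿ`.
-/

open MeasureTheory ENNReal

namespace ENNReal

lemma rpow_one_half_sq (x : ℝ≥0∞) : (x ^ (1 / 2 : ℝ)) ^ 2 = x := by
  rw [← rpow_two, one_div, rpow_inv_rpow two_ne_zero]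

lemma sq_rpow_one_half (x : ℝ≥0∞) : (x ^ 2) ^ (1 / 2 : ℝ) = x := by
  rw [← rpow_two, one_div, rpow_rpow_inv two_ne_zero]

-- With truncated subtraction one of `a - b`, `b - a` vanishes, so the last term is `|a - b|²`.
lemma sq_add_sq_eq_two_mul_add (a b : ℝ≥0∞) :
    a ^ 2 + b ^ 2 = 2 * (a * b) + ((a - b) ^ 2 + (b - a) ^ 2) := by
  wlog hab : a ≤ b generalizing a b
  · have := this b a (le_of_not_ge hab)
    rwa [add_comm (b ^ 2), mul_comm b, add_comm ((b - a) ^ 2)] at this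
  rw [tsub_eq_zero_of_le hab]
  rcases eq_or_ne a ∞ with rfl | ha
  · simp [top_le_iff.mp hab]
  obtain ⟨c, rfl⟩ := exists_add_of_le hab
  rw [ENNReal.add_sub_cancel_left ha]
  ring

end ENNReal

namespace MeasureTheory

section Pi

variable {n : ℕ} {X : Type*} [MeasurableSpace X] (μ : Fin n → Measure X) [∀ i, SigmaFinite (μ i)]

theorem lintegral_fin_nat_prod_eq_prod {f : Fin n → X → ℝ≥0∞} (hf : ∀ i, Measurable (f i)) :
    ∫⁻ x, ∏ i, f i (x i) ∂Measure.pi μ = ∏ i, ∫⁻ x, f i x ∂μ i := by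
  induction n with
  | zero => simp
  | succ n ih =>
    calc
      _ = ∫⁻ x : X × (Fin n → X), f 0 x.1 * ∏ i : Fin n, f i.succ (x.2 i)
          ∂(μ 0).prod (Measure.pi fun i => μ i.succ) := by
        rw [← (measurePreserving_piFinSuccAbove μ 0).symm.lintegral_comp_emb
          (MeasurableEquiv.measurableEmbedding _)]
        simp_rw [MeasurableEquiv.piFinSuccAbove_symm_apply, Fin.insertNthEquiv,
          Fin.prod_univ_succ, Fin.insertNth_zero, Equiv.coe_fn_mk, Fin.cons_succ,
          Fin.zero_succAbove, cast_eq, Fin.cons_zero]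
      _ = (∫⁻ x, f 0 x ∂μ 0) * ∫⁻ y, ∏ i : Fin n, f i.succ (y i) ∂Measure.pi fun i => μ i.succ :=
        lintegral_prod_mul (hf 0).aemeasurable
          (Finset.measurable_prod _ fun (i : Fin n) _ =>
            (hf i.succ).comp (measurable_pi_apply i)).aemeasurable
      _ = ∏ i, ∫⁻ x, f i x ∂μ i := by rw [ih _ fun i => hf i.succ, Fin.prod_univ_succ]

theorem Measure.pi_withDensity {f : Fin n → X → ℝ≥0∞} (hf : ∀ i, Measurable (f i))
    [∀ i, SigmaFinite ((μ i).withDensity (f i))] :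
    Measure.pi (fun i => (μ i).withDensity (f i)) =
      (Measure.pi μ).withDensity fun x => ∏ i, f i (x i) := by
  refine Measure.pi_eq fun S hS => ?_
  rw [withDensity_apply _ (MeasurableSet.univ_pi hS), ← lintegral_indicator (.univ_pi hS)]
  simp_rw [withDensity_apply _ (hS _), ← lintegral_indicator (hS _)]
  rw [← lintegral_fin_nat_prod_eq_prod μ fun i => (hf i).indicator (hS i)]
  refine lintegral_congr fun x => ?_
  simp only [Set.indicator]
  split_ifs with hx
  · exact Finset.prod_congr rfl fun i _ => (if_pos (hx i trivial)).symm
  · obtain ⟨i, hi⟩ := not_forall.mp (Set.mem_univ_pi.not.mp hx)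
    exact (Finset.prod_eq_zero (Finset.mem_univ i) (if_neg hi)).symm

end Pi

section Hellinger

variable {α : Type*} [MeasurableSpace α]

noncomputable def hellingerAffinity (μ : Measure α) (f g : α → ℝ≥0∞) : ℝ≥0∞ :=
  ∫⁻ x, (f x * g x) ^ (1 / 2 : ℝ) ∂μ

variable {μ : Measure α} {f g : α → ℝ≥0∞}

lemma lintegral_add_lintegral_eq_two_mul_hellingerAffinity_add (hf : Measurable f)
    (hg : Measurable g) :
    ∫⁻ x, f x ∂μ + ∫⁻ x, g x ∂μ =
      2 * hellingerAffinity μ f g +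
        ∫⁻ x, ((f x ^ (1 / 2 : ℝ) - g x ^ (1 / 2 : ℝ)) ^ 2 +
          (g x ^ (1 / 2 : ℝ) - f x ^ (1 / 2 : ℝ)) ^ 2) ∂μ := by
  have hfg : Measurable fun x => (f x * g x) ^ (1 / 2 : ℝ) := (hf.mul hg).pow_const _
  rw [hellingerAffinity, ← lintegral_add_left hf, ← lintegral_const_mul _ hfg,
    ← lintegral_add_left (hfg.const_mul _)]
  refine lintegral_congr fun x => ?_
  simpa only [rpow_one_half_sq, mul_rpow_of_nonneg _ _ (by norm_num : (0 : ℝ) ≤ 1 / 2)]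
    using sq_add_sq_eq_two_mul_add (f x ^ (1 / 2 : ℝ)) (g x ^ (1 / 2 : ℝ))

lemma hellingerAffinity_lt_one (hf : Measurable f) (hg : Measurable g)
    (hf1 : ∫⁻ x, f x ∂μ = 1) (hg1 : ∫⁻ x, g x ∂μ = 1) (hne : μ.withDensity f ≠ μ.withDensity g) :
    hellingerAffinity μ f g < 1 := by
  have key := lintegral_add_lintegral_eq_two_mul_hellingerAffinity_add (μ := μ) hf hg
  rw [hf1, hg1, one_add_one_eq_two] at key
  have hle : hellingerAffinity μ f g ≤ 1 := by
    rw [← ENNReal.mul_le_mul_iff_right two_ne_zero ofNat_ne_top, mul_one]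
    exact le_self_add.trans_eq key.symm
  refine hle.lt_of_ne fun heq => hne (withDensity_congr_ae ?_)
  rw [heq, mul_one] at key
  have hsq := (ENNReal.add_right_inj ofNat_ne_top).mp (key.symm.trans (add_zero 2).symm)
  rw [lintegral_eq_zero_iff (by fun_prop)] at hsq
  filter_upwards [hsq] with x hx
  simp only [Pi.zero_apply, add_eq_zero, pow_eq_zero_iff two_ne_zero, tsub_eq_zero_iff_le] at hx
  rw [← rpow_one_half_sq (f x), ← rpow_one_half_sq (g x), hx.1.antisymm hx.2]

lemma setLIntegral_lt_le_hellingerAffinity (hf : Measurable f) (hg : Measurable g) :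
    ∫⁻ x in {x | f x < g x}, f x ∂μ ≤ hellingerAffinity μ f g := by
  refine (setLIntegral_mono (by fun_prop) fun x hx => ?_).trans (setLIntegral_le_lintegral _ _)
  calc f x = (f x * f x) ^ (1 / 2 : ℝ) := by rw [← sq, sq_rpow_one_half]
    _ ≤ (f x * g x) ^ (1 / 2 : ℝ) := by gcongr; exact le_of_lt hx

lemma hellingerAffinity_pi [SigmaFinite μ] (hf : Measurable f) (hg : Measurable g) (n : ℕ) :
    hellingerAffinity (Measure.pi fun _ : Fin n => μ) (fun x => ∏ i, f (x i))
      (fun x => ∏ i, g (x i)) = hellingerAffinity μ f g ^ n := by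
  simp_rw [hellingerAffinity, ← Finset.prod_mul_distrib,
    ← prod_rpow_of_nonneg (by norm_num : (0 : ℝ) ≤ 1 / 2)]
  rw [lintegral_fin_nat_prod_eq_prod _ (f := fun _ x => (f x * g x) ^ (1 / 2 : ℝ))
    fun _ => (hf.mul hg).pow_const _, Finset.prod_const, Finset.card_univ, Fintype.card_fin]

end Hellinger

end MeasureTheory

theorem likelihood_test_error_le_affinity_pow
    {𝒳 : Type*} [MeasurableSpace 𝒳] (μ : Measure 𝒳) [SigmaFinite μ]
    (s t : 𝒳 → ℝ≥0∞) (hs : Measurable s) (ht : Measurable t)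
    (hs1 : ∫⁻ x, s x ∂μ = 1) (ht1 : ∫⁻ x, t x ∂μ = 1)
    (hne : μ.withDensity s ≠ μ.withDensity t) (n : ℕ) :
    (∫⁻ x, (s x * t x) ^ (1/2 : ℝ) ∂μ) < 1 ∧
    (Measure.pi fun _ : Fin n => μ.withDensity s)
        {x | ∏ i, s (x i) < ∏ i, t (x i)} ≤
      (∫⁻ x, (s x * t x) ^ (1/2 : ℝ) ∂μ) ^ n := by
  refine ⟨hellingerAffinity_lt_one hs ht hs1 ht1 hne, ?_⟩
  have := isFiniteMeasure_withDensity (μ := μ) (hs1 ▸ one_ne_top)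
  rw [Measure.pi_withDensity _ fun _ => hs, withDensity_apply']
  calc
    _ ≤ hellingerAffinity (Measure.pi fun _ : Fin n => μ) (fun x => ∏ i, s (x i))
          (fun x => ∏ i, t (x i)) :=
      setLIntegral_lt_le_hellingerAffinity (by fun_prop) (by fun_prop)
    _ = _ := hellingerAffinity_pi hs ht n
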